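/- arXiv:0812.2734 — 3 statements merged into one kernel-verified Lean document; each statement's English description precedes it below -/
import Mathlib

section
/- Every minimal separator of a chordal graph is the intersection of two maximal cliques. -/
open SimpleGraph

variable {V : Type*}

/-- A graph is chordal if it contains no induced cycle of length at least four. -/
def IsChordal (G : SimpleGraph V) : Prop :=
  ∀ n : ℕ, 4 ≤ n → IsEmpty (SimpleGraph.cycleGraph n ↪g G)

/-- `S` separates `u` from `v`: every walk from `u` to `v` meets `S`, and `u, v ∉ S`. -/
def IsSeparator (G : SimpleGraph V) (u v : V) (S : Set V) : Prop :=
  u ∉ S ∧ v ∉ S ∧ ∀ p : G.Walk u v, ∃ x ∈ p.support, x ∈ S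

/-- A `{u,v}`-separator: a separator of `u,v` minimal with this property. -/
def IsMinUVSeparator (G : SimpleGraph V) (u v : V) (S : Set V) : Prop :=
  IsSeparator G u v S ∧ ∀ T, T ⊂ S → ¬ IsSeparator G u v T

/-- A minimal separator: a `{u,v}`-separator for some non-adjacent pair `u ≠ v`. -/
def IsMinimalSeparator (G : SimpleGraph V) (S : Set V) : Prop :=
  ∃ u v, u ≠ v ∧ ¬ G.Adj u v ∧ IsMinUVSeparator G u v S

/-- A maximal clique. -/
def IsMaxClique (G : SimpleGraph V) (Q : Set V) : Prop :=
  G.IsClique Q ∧ ∀ R, G.IsClique R → Q ⊆ R → Q = R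

abbrev MaxClique (G : SimpleGraph V) := {Q : Set V // IsMaxClique G Q}

/-- A clique tree of `G`: a tree on the maximal cliques of `G` such that for every
vertex `v` the maximal cliques containing `v` induce a (nonempty connected) subtree. -/
structure CliqueTree (G : SimpleGraph V) where
  tree : SimpleGraph (MaxClique G)
  isTree : tree.IsTree
  subtree : ∀ v : V, ((tree.induce {Q : MaxClique G | v ∈ Q.1})).Connected

/-- An asteroidal triple: three pairwise non-adjacent vertices such that any two are
joined by a path avoiding the closed neighborhood of the third. -/
def IsAsteroidalTriple (G : SimpleGraph V) (a b c : V) : Prop :=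
  a ≠ b ∧ b ≠ c ∧ a ≠ c ∧ ¬ G.Adj a b ∧ ¬ G.Adj b c ∧ ¬ G.Adj a c ∧
  (∃ p : G.Walk a b, ∀ x ∈ p.support, x ≠ c ∧ ¬ G.Adj c x) ∧
  (∃ p : G.Walk b c, ∀ x ∈ p.support, x ≠ a ∧ ¬ G.Adj a x) ∧
  (∃ p : G.Walk a c, ∀ x ∈ p.support, x ≠ b ∧ ¬ G.Adj b x)

/-!
A minimal `u`–`v` separator `S` is a clique: every vertex of `S` has a neighbour in both the
component `C_u` of `u` and the component `C_v` of `v` in `G - S`, so two non-adjacent vertices of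
`S` would be joined by induced paths through `C_u` and through `C_v`, which together form a hole.
Each of `C_u`, `C_v` contains a vertex adjacent to all of `S`: take a vertex of `C_u` with the most
neighbours in `S`. Maximal cliques `Q ⊇ S ∪ {x_u}` and `R ⊇ S ∪ {x_v}` then satisfy
`Q \ S ⊆ C_u` and `R \ S ⊆ C_v`, hence `Q ∩ R = S` and `Q ≠ R`.
-/

namespace SimpleGraph

variable {G : SimpleGraph V}

theorem cycleGraph_adj_of_lt {n : ℕ} {i j : Fin n} (hij : i < j) :
    (cycleGraph n).Adj i j ↔ j.val = i.val + 1 ∨ (i.val = 0 ∧ j.val + 1 = n) := by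
  have := j.isLt
  rw [cycleGraph_adj', Fin.coe_sub_iff_lt.2 hij, Fin.sub_val_of_le hij.le]
  omega

namespace Walk

variable {a b : V}

/-- A hole, i.e. an induced cycle of length at least four, on the vertices
`c.getVert 0, …, c.getVert (c.length - 1)` of a closed walk. -/
def IsHole {s : V} (c : G.Walk s s) : Prop :=
  4 ≤ c.length ∧ ∀ i j, i < j → j < c.length →
    c.getVert i ≠ c.getVert j ∧
      (G.Adj (c.getVert i) (c.getVert j) → j = i + 1 ∨ (i = 0 ∧ j + 1 = c.length))

def IsInducedPath (p : G.Walk a b) : Prop :=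
  ∀ i j, i < j → j ≤ p.length →
    p.getVert i ≠ p.getVert j ∧ (G.Adj (p.getVert i) (p.getVert j) → j = i + 1)

theorem two_le_length (p : G.Walk a b) (hab : a ≠ b) (hadj : ¬ G.Adj a b) : 2 ≤ p.length := by
  cases p with
  | nil => exact absurd rfl hab
  | cons h p =>
    cases p with
    | nil => exact absurd h hadj
    | cons _ _ => simp

theorem IsInducedPath.reverse {p : G.Walk a b} (hp : p.IsInducedPath) :
    p.reverse.IsInducedPath := by
  intro i j hij hj
  rw [length_reverse] at hj
  rw [getVert_reverse, getVert_reverse, G.adj_comm]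
  obtain ⟨hne, hadj⟩ := hp (p.length - j) (p.length - i) (by omega) (by omega)
  exact ⟨hne.symm, fun h => by have := hadj h; omega⟩

theorem IsInducedPath.getVert_mem {A : Set V} {p : G.Walk a b} (hp : p.IsInducedPath)
    (hA : ∀ x ∈ p.support, x ∈ A ∨ x = a ∨ x = b) {i : ℕ} (hi0 : 0 < i) (hi : i < p.length) :
    p.getVert i ∈ A := by
  rcases hA _ (p.getVert_mem_support i) with h | h | h
  · exact h
  · exact absurd (p.getVert_zero.trans h.symm) (hp 0 i hi0 hi.le).1
  · exact absurd (h.trans p.getVert_length.symm) (hp i _ hi le_rfl).1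

theorem exists_shorter_of_not_isInducedPath {p : G.Walk a b} (h : ¬ p.IsInducedPath) :
    ∃ q : G.Walk a b, q.support ⊆ p.support ∧ q.length < p.length := by
  unfold IsInducedPath at h
  push Not at h
  obtain ⟨i, j, hij, hj, h⟩ := h
  have htake : (p.take i).support ⊆ p.support := by
    rw [support_take]; exact List.take_subset _ _
  have hdrop : (p.drop j).support ⊆ p.support := by
    rw [drop_support_eq_support_drop_min]; exact List.drop_subset _ _
  by_cases heq : p.getVert i = p.getVert j
  · refine ⟨(p.take i).append ((p.drop j).copy heq.symm rfl), ?_, ?_⟩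
    · rw [support_append, support_copy]
      exact List.append_subset.2 ⟨htake, List.Subset.trans (List.tail_subset _) hdrop⟩
    · simp only [length_append, length_copy, take_length, drop_length]
      omega
  · obtain ⟨hadj, hne⟩ := h heq
    refine ⟨(p.take i).append (cons hadj (p.drop j)), ?_, ?_⟩
    · rw [support_append, support_cons, List.tail_cons]
      exact List.append_subset.2 ⟨htake, hdrop⟩
    · simp only [length_append, length_cons, take_length, drop_length]
      omega

theorem exists_isInducedPath (p : G.Walk a b) :
    ∃ q : G.Walk a b, q.IsInducedPath ∧ q.support ⊆ p.support := by
  induction hn : p.length using Nat.strong_induction_on generalizing p with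
  | _ n ih =>
    by_cases hp : p.IsInducedPath
    · exact ⟨p, hp, List.Subset.refl _⟩
    · obtain ⟨q, hqp, hlen⟩ := exists_shorter_of_not_isInducedPath hp
      obtain ⟨r, hr, hrq⟩ := ih _ (hn ▸ hlen) q rfl
      exact ⟨r, hr, List.Subset.trans hrq hqp⟩

theorem IsInducedPath.append_isHole {s t : V} {p : G.Walk s t} {r : G.Walk t s}
    (hp : p.IsInducedPath) (hr : r.IsInducedPath) (hpl : 2 ≤ p.length) (hrl : 2 ≤ r.length)
    (hsep : ∀ i j, 0 < i → i < p.length → 0 < j → j < r.length →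
      p.getVert i ≠ r.getVert j ∧ ¬ G.Adj (p.getVert i) (r.getVert j)) :
    (p.append r).IsHole := by
  refine ⟨by rw [length_append]; omega, fun i j hij hj => ?_⟩
  rw [length_append] at hj ⊢
  rw [getVert_append, getVert_append']
  by_cases hjp : j ≤ p.length
  · rw [if_pos (by omega), if_pos hjp]
    exact (hp i j hij hjp).imp_right fun h hadj => Or.inl (h hadj)
  rw [if_neg hjp]
  by_cases hip : p.length ≤ i
  · rw [if_neg (by omega)]
    exact (hr _ _ (by omega) (by omega)).imp_right fun h hadj => Or.inl (by have := h hadj; omega)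
  rw [if_pos (by omega)]
  rcases Nat.eq_zero_or_pos i with rfl | hi0
  · obtain ⟨hne, hadj⟩ := hr (j - p.length) r.length (by omega) le_rfl
    rw [r.getVert_length] at hne hadj
    rw [p.getVert_zero, G.adj_comm]
    exact ⟨hne.symm, fun h => Or.inr ⟨rfl, by have := hadj h; omega⟩⟩
  · exact (hsep i _ hi0 (by omega) (by omega) (by omega)).imp_right fun h hadj => (h hadj).elim

theorem exists_adj_first_mem {T : Set V} (p : G.Walk a b) (ha : a ∉ T)
    (hT : ∃ w ∈ p.support, w ∈ T) :
    ∃ x y, G.Adj x y ∧ y ∈ T ∧ y ∈ p.support ∧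
      ∃ q : G.Walk a x, ∀ w ∈ q.support, w ∈ p.support ∧ w ∉ T := by
  induction p with
  | nil =>
    obtain ⟨w, hw, hwT⟩ := hT
    rw [mem_support_nil_iff] at hw
    exact absurd (hw ▸ hwT) ha
  | @cons a c b h p ih =>
    by_cases hc : c ∈ T
    · exact ⟨a, c, h, hc, by simp, .nil, by simpa using ha⟩
    obtain ⟨w, hw, hwT⟩ := hT
    have hw' : w ∈ p.support := by
      rw [support_cons, List.mem_cons] at hw
      exact hw.resolve_left (by rintro rfl; exact ha hwT)
    obtain ⟨x, y, hxy, hyT, hyp, q, hq⟩ := ih hc ⟨w, hw', hwT⟩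
    refine ⟨x, y, hxy, hyT, by simp [hyp], .cons h q, fun z hz => ?_⟩
    rw [support_cons, List.mem_cons] at hz
    rcases hz with rfl | hz
    · simpa using ha
    · exact ⟨by simp [(hq z hz).1], (hq z hz).2⟩

end Walk

end SimpleGraph

section

variable {G : SimpleGraph V}

theorem IsChordal.not_isHole (hG : IsChordal G) {s : V} (c : G.Walk s s) : ¬ c.IsHole := by
  rintro ⟨hlen, hc⟩
  have hadj_iff : ∀ i j : Fin c.length, i < j →
      (G.Adj (c.getVert i) (c.getVert j) ↔ (cycleGraph c.length).Adj i j) := by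
    intro i j hij
    rw [cycleGraph_adj_of_lt hij]
    refine ⟨(hc i j hij j.isLt).2, ?_⟩
    rintro (h | ⟨hi, hj⟩)
    · exact h ▸ c.adj_getVert_succ i.isLt
    · have := c.adj_getVert_succ (i := j) (by omega)
      rw [show (j : ℕ) + 1 = c.length by omega, c.getVert_length] at this
      rwa [hi, c.getVert_zero, G.adj_comm]
  refine (hG c.length hlen).false ⟨⟨fun i => c.getVert i, ?_⟩, fun {i j} => ?_⟩
  · intro i j hij
    by_contra hne
    rcases lt_or_gt_of_ne hne with h | h
    · exact (hc i j h j.isLt).1 hij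
    · exact (hc j i h i.isLt).1 hij.symm
  · show G.Adj (c.getVert i) (c.getVert j) ↔ _
    rcases lt_trichotomy i j with h | rfl | h
    · exact hadj_iff i j h
    · simp
    · rw [G.adj_comm, (cycleGraph _).adj_comm]
      exact hadj_iff j i h

theorem IsChordal.adj_of_walks (hG : IsChordal G) {A B : Set V}
    (hAB : ∀ a ∈ A, ∀ b ∈ B, a ≠ b ∧ ¬ G.Adj a b) {s t : V} (hst : s ≠ t)
    (p : G.Walk s t) (hp : ∀ x ∈ p.support, x ∈ A ∨ x = s ∨ x = t)
    (q : G.Walk s t) (hq : ∀ x ∈ q.support, x ∈ B ∨ x = s ∨ x = t) : G.Adj s t := by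
  by_contra hadj
  obtain ⟨p', hp', hp's⟩ := p.exists_isInducedPath
  obtain ⟨q', hq', hq's⟩ := q.exists_isInducedPath
  have hq'B : ∀ x ∈ q'.reverse.support, x ∈ B ∨ x = t ∨ x = s := by
    intro x hx
    rw [Walk.support_reverse, List.mem_reverse] at hx
    have := hq x (hq's hx)
    tauto
  refine hG.not_isHole _ (hp'.append_isHole hq'.reverse (p'.two_le_length hst hadj)
    (by rw [Walk.length_reverse]; exact q'.two_le_length hst hadj) fun i j hi0 hi hj0 hj => ?_)
  exact hAB _ (hp'.getVert_mem (fun x hx => hp x (hp's hx)) hi0 hi) _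
    (hq'.reverse.getVert_mem hq'B hj0 hj)

end

def ReachableAvoiding (G : SimpleGraph V) (S : Set V) (u x : V) : Prop :=
  ∃ p : G.Walk u x, ∀ y ∈ p.support, y ∉ S

namespace ReachableAvoiding

variable {G : SimpleGraph V} {S : Set V} {u x y : V}

theorem refl (hu : u ∉ S) : ReachableAvoiding G S u u :=
  ⟨.nil, by simpa using hu⟩

theorem notMem (h : ReachableAvoiding G S u x) : x ∉ S :=
  h.elim fun p hp => hp x p.end_mem_support

theorem symm (h : ReachableAvoiding G S u x) : ReachableAvoiding G S x u :=
  h.elim fun p hp => ⟨p.reverse, by simpa using hp⟩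

theorem trans (h : ReachableAvoiding G S u x) (h' : ReachableAvoiding G S x y) :
    ReachableAvoiding G S u y := by
  obtain ⟨p, hp⟩ := h
  obtain ⟨q, hq⟩ := h'
  exact ⟨p.append q, fun z hz => (Walk.mem_support_append_iff _ _).1 hz |>.elim (hp z) (hq z)⟩

theorem step (h : ReachableAvoiding G S u x) (hadj : G.Adj x y) (hy : y ∉ S) :
    ReachableAvoiding G S u y :=
  h.trans ⟨hadj.toWalk, by simp [h.notMem, hy]⟩

theorem of_mem_support (p : G.Walk u x) (hp : ∀ z ∈ p.support, z ∉ S) (hy : y ∈ p.support) :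
    ReachableAvoiding G S u y := by
  classical
  exact ⟨p.takeUntil y hy, fun z hz => hp z (p.support_takeUntil_subset_support hy hz)⟩

theorem exists_walk (hx : ReachableAvoiding G S u x) (hy : ReachableAvoiding G S u y) :
    ∃ p : G.Walk x y, ∀ z ∈ p.support, ReachableAvoiding G S u z := by
  obtain ⟨p, hp⟩ := hx.symm.trans hy
  exact ⟨p, fun z hz => hx.trans (of_mem_support p hp hz)⟩

end ReachableAvoiding

section

variable {G : SimpleGraph V} {S : Set V} {u v x : V}

theorem IsSeparator.not_reachableAvoiding (hsep : IsSeparator G u v S)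
    (hu : ReachableAvoiding G S u x) : ¬ ReachableAvoiding G S v x := by
  intro hv
  obtain ⟨p, hp⟩ := hu.trans hv.symm
  obtain ⟨z, hz, hzS⟩ := hsep.2.2 p
  exact hp z hz hzS

theorem IsSeparator.symm (hsep : IsSeparator G u v S) : IsSeparator G v u S :=
  ⟨hsep.2.1, hsep.1, fun p => by simpa using hsep.2.2 p.reverse⟩

theorem IsMinUVSeparator.symm (hmin : IsMinUVSeparator G u v S) : IsMinUVSeparator G v u S :=
  ⟨hmin.1.symm, fun T hT hsep => hmin.2 T hT hsep.symm⟩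

theorem IsMinUVSeparator.exists_reachableAvoiding_adj (hmin : IsMinUVSeparator G u v S)
    {s : V} (hs : s ∈ S) : ∃ x, ReachableAvoiding G S u x ∧ G.Adj x s := by
  obtain ⟨⟨hu, hv, hsep⟩, hminimal⟩ := hmin
  have hnot : ¬ IsSeparator G u v (S \ {s}) :=
    hminimal _ (Set.sdiff_singleton_ssubset.2 hs)
  obtain ⟨p, hp⟩ : ∃ p : G.Walk u v, ∀ z ∈ p.support, z ∉ S \ {s} := by
    by_contra! h
    exact hnot ⟨fun h' => hu h'.1, fun h' => hv h'.1, h⟩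
  obtain ⟨x, y, hxy, hyS, hyp, q, hq⟩ := p.exists_adj_first_mem hu (hsep p)
  have hys : y = s := by
    by_contra hys
    exact hp y hyp ⟨hyS, hys⟩
  exact ⟨x, ⟨q, fun z hz => (hq z hz).2⟩, hys ▸ hxy⟩

theorem IsMinUVSeparator.exists_walk_via_component (hmin : IsMinUVSeparator G u v S)
    {s t : V} (hs : s ∈ S) (ht : t ∈ S) :
    ∃ p : G.Walk s t, ∀ z ∈ p.support, ReachableAvoiding G S u z ∨ z = s ∨ z = t := by
  obtain ⟨x, hx, hxs⟩ := hmin.exists_reachableAvoiding_adj hs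
  obtain ⟨y, hy, hyt⟩ := hmin.exists_reachableAvoiding_adj ht
  obtain ⟨w, hw⟩ := hx.exists_walk hy
  refine ⟨.cons hxs.symm (w.concat hyt), fun z hz => ?_⟩
  simp only [Walk.support_cons, Walk.support_concat, List.mem_cons, List.mem_append,
    List.mem_nil_iff, or_false] at hz
  rcases hz with rfl | hz | rfl
  · exact Or.inr (Or.inl rfl)
  · exact Or.inl (hw z hz)
  · exact Or.inr (Or.inr rfl)

theorem IsMinUVSeparator.isClique (hG : IsChordal G) (hmin : IsMinUVSeparator G u v S) :
    G.IsClique S := by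
  intro s hs t ht hst
  obtain ⟨p, hp⟩ := hmin.exists_walk_via_component hs ht
  obtain ⟨q, hq⟩ := hmin.symm.exists_walk_via_component hs ht
  refine hG.adj_of_walks (fun a (ha : ReachableAvoiding G S u a) b
    (hb : ReachableAvoiding G S v b) => ⟨?_, fun hab => ?_⟩) hst p hp q hq
  · rintro rfl
    exact hmin.1.not_reachableAvoiding ha hb
  · exact hmin.1.not_reachableAvoiding (ha.step hab hb.notMem) hb

theorem IsMinUVSeparator.exists_reachableAvoiding_forall_adj [Finite V] (hG : IsChordal G)
    (hmin : IsMinUVSeparator G u v S) :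
    ∃ x, ReachableAvoiding G S u x ∧ ∀ s ∈ S, G.Adj x s := by
  obtain ⟨x, hx, hmax⟩ := Set.exists_max_image {x | ReachableAvoiding G S u x}
    (fun x => {s ∈ S | G.Adj x s}.ncard) (Set.toFinite _) ⟨u, .refl hmin.1.1⟩
  refine ⟨x, hx, ?_⟩
  by_contra! ⟨s, hs, hxs⟩
  obtain ⟨y, hy, hys⟩ := hmin.exists_reachableAvoiding_adj hs
  obtain ⟨w, hw⟩ := hx.exists_walk hy
  obtain ⟨x', y', hxy', hy's, hy'w, q, hq⟩ :=
    w.exists_adj_first_mem (T := {z | G.Adj z s}) hxs ⟨y, w.end_mem_support, hys⟩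
  replace hy's : G.Adj y' s := hy's
  have hy' : ReachableAvoiding G S u y' := hw y' hy'w
  have hgain : ∀ t ∈ S, G.Adj x t → G.Adj y' t := by
    intro t ht hxt
    have hts : t ≠ s := by rintro rfl; exact hxs hxt
    -- otherwise `t, x, …, x', y', s` would be a hole
    refine (hG.adj_of_walks (A := {z | ReachableAvoiding G S u z ∧ ¬ G.Adj z s}) (B := {s})
      ?_ (by rintro rfl; exact hy'.notMem ht) (.cons hxt.symm (q.concat hxy')) ?_
      (.cons (hmin.isClique hG ht hs hts) (.cons hy's.symm .nil)) (by simp)).symm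
    · rintro a ⟨ha, has⟩ b rfl
      exact ⟨fun h => ha.notMem (h ▸ hs), has⟩
    · intro z hz
      simp only [Walk.support_cons, Walk.support_concat, List.mem_cons, List.mem_append,
        List.mem_nil_iff, or_false] at hz
      rcases hz with rfl | hz | rfl
      · exact Or.inr (Or.inl rfl)
      · exact Or.inl ⟨hw z (hq z hz).1, (hq z hz).2⟩
      · exact Or.inr (Or.inr rfl)
  have hsub : {t ∈ S | G.Adj x t} ⊆ {t ∈ S | G.Adj y' t} :=
    fun t ht => ⟨ht.1, hgain t ht.1 ht.2⟩
  have hlt : {t ∈ S | G.Adj x t}.ncard < {t ∈ S | G.Adj y' t}.ncard :=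
    Set.ncard_lt_ncard ((Set.ssubset_iff_of_subset hsub).2 ⟨s, ⟨hs, hy's⟩, fun h => hxs h.2⟩)
  exact (hmax y' hy').not_gt hlt

theorem exists_isMaxClique_superset [Finite V] {C : Set V} (hC : G.IsClique C) :
    ∃ Q, IsMaxClique G Q ∧ C ⊆ Q := by
  obtain ⟨Q, hCQ, hQ⟩ := Finite.exists_le_maximal (p := G.IsClique) hC
  exact ⟨Q, ⟨hQ.prop, fun R hR hQR => hQR.antisymm (hQ.2 hR hQR)⟩, hCQ⟩

theorem SimpleGraph.IsClique.reachableAvoiding_of_mem {Q : Set V} (hQ : G.IsClique Q)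
    (hx : x ∈ Q) (hux : ReachableAvoiding G S u x) {z : V} (hz : z ∈ Q) (hzS : z ∉ S) :
    ReachableAvoiding G S u z := by
  by_cases h : x = z
  · exact h ▸ hux
  · exact hux.step (hQ hx hz h) hzS

end

/-- Every minimal separator of a chordal graph is the intersection of two maximal
cliques. -/
theorem minimal_separator_inter_max_cliques [Fintype V] (G : SimpleGraph V)
    (hG : IsChordal G) (S : Set V) (hS : IsMinimalSeparator G S) :
    ∃ Q R : Set V, IsMaxClique G Q ∧ IsMaxClique G R ∧ Q ≠ R ∧ S = Q ∩ R := by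
  obtain ⟨u, v, -, -, hmin⟩ := hS
  have hSclique := hmin.isClique hG
  obtain ⟨x, hx, hxS⟩ := hmin.exists_reachableAvoiding_forall_adj hG
  obtain ⟨y, hy, hyS⟩ := hmin.symm.exists_reachableAvoiding_forall_adj hG
  obtain ⟨Q, hQ, hxQ⟩ := exists_isMaxClique_superset (hSclique.insert fun s hs _ => hxS s hs)
  obtain ⟨R, hR, hyR⟩ := exists_isMaxClique_superset (hSclique.insert fun s hs _ => hyS s hs)
  have hQu : ∀ z ∈ Q, z ∉ S → ReachableAvoiding G S u z :=
    fun z => hQ.1.reachableAvoiding_of_mem (hxQ (Set.mem_insert x S)) hx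
  have hRv : ∀ z ∈ R, z ∉ S → ReachableAvoiding G S v z :=
    fun z => hR.1.reachableAvoiding_of_mem (hyR (Set.mem_insert y S)) hy
  refine ⟨Q, R, hQ, hR, ?_, ?_⟩
  · rintro rfl
    exact hmin.1.not_reachableAvoiding hx (hRv x (hxQ (Set.mem_insert x S)) hx.notMem)
  · refine (Set.subset_inter ((Set.subset_insert x S).trans hxQ)
      ((Set.subset_insert y S).trans hyR)).antisymm fun z ⟨hzQ, hzR⟩ => ?_
    by_contra hzS
    exact hmin.1.not_reachableAvoiding (hQu z hzQ hzS) (hRv z hzR hzS)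
end

section
/- Let G be a directed path graph, and let u and v be two non-adjacent vertices that have a common neighbor. Then for every clique directed path tree T of G, the path T(u,v) between a clique containing u and a clique containing v is a directed path. -/
open SimpleGraph

variable {V : Type*}

/-- A chordless (induced) path `x 0 - x 1 - ⋯ - x n`: injective, with adjacency exactly
between consecutive vertices. -/
def IsChordlessPathFun (G : SimpleGraph V) {n : ℕ} (x : Fin (n+1) → V) : Prop :=
  Function.Injective x ∧ ∀ i j : Fin (n+1), i < j → (G.Adj (x i) (x j) ↔ (j : ℕ) = (i : ℕ) + 1)

/-- Attachment of type 1 on `{l1,l2}, {r1,r2}` using vertices of `Z`. -/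
def Attach1 (G : SimpleGraph V) (Z : Set V) (l1 l2 r1 r2 : V) : Prop :=
  ∃ z ∈ Z, ∃ z' ∈ Z, z ≠ z' ∧ ¬ G.Adj z z' ∧
    G.Adj z l1 ∧ G.Adj z l2 ∧ G.Adj z r1 ∧ ¬ G.Adj z r2 ∧
    G.Adj z' r1 ∧ G.Adj z' r2 ∧ G.Adj z' l1 ∧ ¬ G.Adj z' l2

/-- Attachment of type 2 on `{l1,l2}, {r1,r2}` using vertices of `Z`, relative to the
set `P = X ∪ Y ∪ {u,v}` of path vertices.  Here `z 0 = l1`, `z (last) = r1` and the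
interior values of `z` are the `2t+1` clique vertices; `z' k` sees exactly
`z k.castSucc` and `z k.succ`. -/
def Attach2 (G : SimpleGraph V) (Z P : Set V) (l1 l2 r1 r2 : V) : Prop :=
  ∃ (t : ℕ) (z : Fin (2*t+3) → V) (z' : Fin (2*t+2) → V),
    z 0 = l1 ∧ z (Fin.last (2*t+2)) = r1 ∧
    Function.Injective z ∧ Function.Injective z' ∧
    (∀ k : Fin (2*t+3), k ≠ 0 → k ≠ Fin.last (2*t+2) → z k ∈ Z) ∧
    (∀ k, z' k ∈ Z) ∧
    G.IsClique ({l1, l2, r1, r2} ∪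
      {w | ∃ k : Fin (2*t+3), k ≠ 0 ∧ k ≠ Fin.last (2*t+2) ∧ z k = w}) ∧
    (∀ k : Fin (2*t+3), k ≠ 0 → k ≠ Fin.last (2*t+2) → ∀ w ∈ P,
      (G.Adj (z k) w ↔ w = l1 ∨ w = l2 ∨ w = r1 ∨ w = r2)) ∧
    (∀ k m : Fin (2*t+2), k ≠ m → ¬ G.Adj (z' k) (z' m)) ∧
    (∀ k : Fin (2*t+2), ∀ w,
      w ∈ P ∪ ({l1, l2, r1, r2} ∪
        {w | ∃ k : Fin (2*t+3), k ≠ 0 ∧ k ≠ Fin.last (2*t+2) ∧ z k = w}) →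
      (G.Adj (z' k) w ↔ w = z k.castSucc ∨ w = z k.succ))

/-- Two non-adjacent vertices `u, v` are linked by a strong path: either they have a
common neighbor, or there are two chordless paths `u-x₁-⋯-x_r-v`, `u-y₁-⋯-y_s-v`
(`r,s ≥ 2`) with disjoint interiors, and a set `Z` disjoint from them, such that every
clique of size four `x_i, x_{i+1}, y_j, y_{j+1}` carries an attachment of type 1 or 2. -/
def LinkedByStrongPath (G : SimpleGraph V) (u v : V) : Prop :=
  (∃ w, G.Adj u w ∧ G.Adj v w) ∨
  (∃ (r s : ℕ), 2 ≤ r ∧ 2 ≤ s ∧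
    ∃ (x : Fin (r+2) → V) (y : Fin (s+2) → V) (Z : Set V),
      x 0 = u ∧ x (Fin.last (r+1)) = v ∧ y 0 = u ∧ y (Fin.last (s+1)) = v ∧
      IsChordlessPathFun G x ∧ IsChordlessPathFun G y ∧
      (∀ i : Fin (r+2), i ≠ 0 → i ≠ Fin.last (r+1) →
        ∀ j : Fin (s+2), j ≠ 0 → j ≠ Fin.last (s+1) → x i ≠ y j) ∧
      Z ∩ (Set.range x ∪ Set.range y) = ∅ ∧
      ∀ i j : ℕ, ∀ _hi1 : 1 ≤ i, ∀ _hi2 : i + 1 ≤ r, ∀ _hj1 : 1 ≤ j, ∀ _hj2 : j + 1 ≤ s,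
        G.Adj (x ⟨i, by omega⟩) (y ⟨j, by omega⟩) →
        G.Adj (x ⟨i, by omega⟩) (y ⟨j+1, by omega⟩) →
        G.Adj (x ⟨i+1, by omega⟩) (y ⟨j, by omega⟩) →
        G.Adj (x ⟨i+1, by omega⟩) (y ⟨j+1, by omega⟩) →
        ∃ l1 l2 r1 r2 : V,
          ((l1 = x ⟨i, by omega⟩ ∧ l2 = y ⟨j, by omega⟩) ∨
           (l1 = y ⟨j, by omega⟩ ∧ l2 = x ⟨i, by omega⟩)) ∧
          ((r1 = x ⟨i+1, by omega⟩ ∧ r2 = y ⟨j+1, by omega⟩) ∨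
           (r1 = y ⟨j+1, by omega⟩ ∧ r2 = x ⟨i+1, by omega⟩)) ∧
          (Attach1 G Z l1 l2 r1 r2 ∨
           Attach2 G Z (Set.range x ∪ Set.range y) l1 l2 r1 r2))

/-- A strong asteroidal triple: an asteroidal triple each pair of which is linked by a
strong path. -/
def IsStrongAsteroidalTriple (G : SimpleGraph V) (a b c : V) : Prop :=
  IsAsteroidalTriple G a b c ∧
    LinkedByStrongPath G a b ∧ LinkedByStrongPath G b c ∧ LinkedByStrongPath G a c

/-- A weak asteroidal triple: an asteroidal triple some pair of which is linked by a
strong path. -/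
def IsWeakAsteroidalTriple (G : SimpleGraph V) (a b c : V) : Prop :=
  IsAsteroidalTriple G a b c ∧
    (LinkedByStrongPath G a b ∨ LinkedByStrongPath G b c ∨ LinkedByStrongPath G a c)

/-- An asteroidal quadruple: four vertices any three of which form an asteroidal triple. -/
def IsAsteroidalQuadruple (G : SimpleGraph V) (a b c d : V) : Prop :=
  IsAsteroidalTriple G a b c ∧ IsAsteroidalTriple G a b d ∧
  IsAsteroidalTriple G a c d ∧ IsAsteroidalTriple G b c d

/-- A weak asteroidal quadruple: four vertices any three of which form a weak
asteroidal triple. -/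
def IsWeakAsteroidalQuadruple (G : SimpleGraph V) (a b c d : V) : Prop :=
  IsWeakAsteroidalTriple G a b c ∧ IsWeakAsteroidalTriple G a b d ∧
  IsWeakAsteroidalTriple G a c d ∧ IsWeakAsteroidalTriple G b c d

/-- A clique directed path tree: a clique tree together with an orientation `D` of its
edges such that for every vertex `w` of `G`, the cliques containing `w` form a directed
path. -/
structure CliqueDPT (G : SimpleGraph V) extends CliqueTree G where
  D : MaxClique G → MaxClique G → Prop
  dadj : ∀ Q R, D Q R → tree.Adj Q R
  total : ∀ Q R, tree.Adj Q R → D Q R ∨ D R Q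
  antisymm : ∀ Q R, D Q R → ¬ D R Q
  dirpath : ∀ w : V, ∃ (n : ℕ) (e : Fin (n+1) ≃ {Q : MaxClique G // w ∈ Q.1}),
    ∀ i : Fin n, D (e i.castSucc).1 (e i.succ).1

/-- A clique rooted path tree: a clique directed path tree whose orientation makes the
tree rooted (every clique is reachable from the root along directed edges). -/
structure CliqueRPT (G : SimpleGraph V) extends CliqueDPT G where
  root : MaxClique G
  rooted : ∀ Q, Relation.ReflTransGen D root Q

/-- A directed path graph: a graph having a clique directed path tree. -/
def DirectedPathGraph (G : SimpleGraph V) : Prop := Nonempty (CliqueDPT G)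

/-- A rooted path graph: a graph having a clique rooted path tree. -/
def RootedPathGraph (G : SimpleGraph V) : Prop := Nonempty (CliqueRPT G)

/-- `T(u,v)` is a directed path: the tree path between the closest cliques containing
`u` resp. `v` (characterized by: `u` only in its first vertex, `v` only in its last)
has all its edges oriented in the same direction. -/
def TuvDirected (G : SimpleGraph V) (T : CliqueDPT G) (u v : V) : Prop :=
  ∃ (n : ℕ) (p : Fin (n+1) → MaxClique G),
    Function.Injective p ∧
    u ∈ (p 0).1 ∧ v ∈ (p (Fin.last n)).1 ∧
    (∀ i, i ≠ (0 : Fin (n+1)) → u ∉ (p i).1) ∧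
    (∀ i, i ≠ Fin.last n → v ∉ (p i).1) ∧
    ((∀ i : Fin n, T.D (p i.castSucc) (p i.succ)) ∨
     (∀ i : Fin n, T.D (p i.succ) (p i.castSucc)))

/-!
The cliques containing the common neighbour `w` form a directed path of `T`, and since `{u, w}`
and `{v, w}` extend to maximal cliques, cliques containing `u` and cliques containing `v` both
occur on it. The segment of this directed path between a closest such pair of cliques is `T(u,v)`,
so `T(u,v)` is directed, forwards or backwards.
-/

theorem SimpleGraph.IsClique.exists_maxClique_superset {G : SimpleGraph V} {C : Set V}
    (hC : G.IsClique C) : ∃ Q : MaxClique G, C ⊆ Q.1 := by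
  obtain ⟨Q, hCQ, hQ⟩ := zorn_subset_nonempty {s | G.IsClique s}
    (fun S hS hchain _ => ⟨⋃₀ S, (isClique_sUnion hchain.directedOn).2 hS,
      fun _ => Set.subset_sUnion_of_mem⟩) C hC
  exact ⟨⟨Q, hQ.prop, fun R hR hQR => hQR.antisymm (hQ.2 hR hQR)⟩, hCQ⟩

section ClosestPath

variable {α : Type*}

def IsClosestPath (P Q : α → Prop) {m : ℕ} (p : Fin (m + 1) → α) : Prop :=
  Function.Injective p ∧ P (p 0) ∧ Q (p (Fin.last m)) ∧
    (∀ i, i ≠ 0 → ¬ P (p i)) ∧ (∀ i, i ≠ Fin.last m → ¬ Q (p i))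

variable (D : α → α → Prop) (P Q : α → Prop) {n : ℕ} {c : Fin (n + 1) → α}

theorem exists_closestPath_of_le (hc : Function.Injective c)
    (hD : ∀ i : Fin n, D (c i.castSucc) (c i.succ)) {a b : Fin (n + 1)} (hab : a ≤ b)
    (ha : P (c a)) (hb : Q (c b)) (hP : ∀ k, a < k → k ≤ b → ¬ P (c k))
    (hQ : ∀ k, a ≤ k → k < b → ¬ Q (c k)) :
    ∃ (m : ℕ) (p : Fin (m + 1) → α),
      IsClosestPath P Q p ∧ ∀ i : Fin m, D (p i.castSucc) (p i.succ) := by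
  have hab' : (a : ℕ) ≤ b := hab
  let idx : Fin ((b : ℕ) - a + 1) → Fin (n + 1) := fun k => ⟨a + k, by omega⟩
  have hidx : StrictMono idx := fun k l hkl => Nat.add_lt_add_left hkl a
  have hidx_zero : idx 0 = a := Fin.ext (Nat.add_zero a)
  have hidx_last : idx (Fin.last _) = b := Fin.ext (Nat.add_sub_cancel' hab')
  refine ⟨(b : ℕ) - a, c ∘ idx,
    ⟨hc.comp hidx.injective, by simpa [hidx_zero], by simpa [hidx_last],
      fun k hk => hP _ ?_ ?_, fun k hk => hQ _ ?_ ?_⟩,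
    fun i => hD ⟨a + i, by omega⟩⟩
  · exact hidx_zero ▸ hidx (Fin.pos_iff_ne_zero.2 hk)
  · exact hidx_last ▸ hidx.monotone (Fin.le_last k)
  · exact hidx_zero ▸ hidx.monotone (Fin.zero_le k)
  · exact hidx_last ▸ hidx (Fin.lt_last_iff_ne_last.2 hk)

theorem exists_closestPath_of_exists_le (hc : Function.Injective c)
    (hD : ∀ i : Fin n, D (c i.castSucc) (c i.succ))
    (h : ∃ a b, a ≤ b ∧ P (c a) ∧ Q (c b)) :
    ∃ (m : ℕ) (p : Fin (m + 1) → α),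
      IsClosestPath P Q p ∧ ∀ i : Fin m, D (p i.castSucc) (p i.succ) := by
  obtain ⟨a₀, b₀, h₀, ha₀, hb₀⟩ := h
  -- `b` is the first `Q`-index preceded by a `P`-index, `a` the last `P`-index up to `b`.
  obtain ⟨b, ⟨⟨a₁, ha₁b, ha₁⟩, hb⟩, hbmin⟩ := exists_minimal_of_wellFoundedLT
    (fun j => (∃ i ≤ j, P (c i)) ∧ Q (c j)) ⟨b₀, ⟨a₀, h₀, ha₀⟩, hb₀⟩
  obtain ⟨a, ⟨hab, ha⟩, hamax⟩ := exists_maximal_of_wellFoundedGT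
    (fun i => i ≤ b ∧ P (c i)) ⟨a₁, ha₁b, ha₁⟩
  exact exists_closestPath_of_le D P Q hc hD hab ha hb
    (fun k hak hkb hk => (hamax ⟨hkb, hk⟩ hak.le).not_gt hak)
    (fun k hak hkb hk => (hbmin ⟨⟨a, hak, ha⟩, hk⟩ hkb.le).not_gt hkb)

theorem exists_closestPath (hc : Function.Injective c)
    (hD : ∀ i : Fin n, D (c i.castSucc) (c i.succ)) (hP : ∃ a, P (c a)) (hQ : ∃ b, Q (c b)) :
    ∃ (m : ℕ) (p : Fin (m + 1) → α), IsClosestPath P Q p ∧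
      ((∀ i : Fin m, D (p i.castSucc) (p i.succ)) ∨
        (∀ i : Fin m, D (p i.succ) (p i.castSucc))) := by
  obtain ⟨a, ha⟩ := hP
  obtain ⟨b, hb⟩ := hQ
  rcases le_total a b with hab | hba
  · obtain ⟨m, p, hp, hpD⟩ :=
      exists_closestPath_of_exists_le D P Q hc hD ⟨a, b, hab, ha, hb⟩
    exact ⟨m, p, hp, .inl hpD⟩
  · obtain ⟨m, p, hp, hpD⟩ := exists_closestPath_of_exists_le (flip D) P Q (c := c ∘ Fin.rev)
      (hc.comp Fin.rev_injective)
      (fun i => by simpa [flip, Fin.rev_succ, Fin.rev_castSucc] using hD i.rev)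
      ⟨a.rev, b.rev, Fin.rev_le_rev.2 hba, by simpa using ha, by simpa using hb⟩
    exact ⟨m, p, hp, .inr hpD⟩

end ClosestPath

theorem common_neighbor_Tuv_directed_general (G : SimpleGraph V)
    (u v : V)
    (w : V) (hw : G.Adj u w ∧ G.Adj v w) :
    ∀ T : CliqueDPT G, TuvDirected G T u v := by
  intro T
  obtain ⟨n, e, he⟩ := T.dirpath w
  have hmem : ∀ x, G.Adj x w → ∃ i, x ∈ (e i).1.1 := by
    intro x hx
    obtain ⟨Q, hQ⟩ := (isClique_pair.2 fun _ => hx).exists_maxClique_superset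
    exact ⟨e.symm ⟨Q, hQ (by simp)⟩, by simpa using hQ (by simp)⟩
  obtain ⟨m, p, ⟨hinj, hu, hv, hu', hv'⟩, hdir⟩ :=
    exists_closestPath T.D (u ∈ ·.1) (v ∈ ·.1)
      (Subtype.val_injective.comp e.injective) he (hmem u hw.1) (hmem v hw.2)
  exact ⟨m, p, hinj, hu, hv, hu', hv', hdir⟩

/-- If `u` and `v` are non-adjacent vertices of a directed path graph having a common
neighbor, then in every clique directed path tree the path `T(u,v)` is directed. -/
theorem common_neighbor_Tuv_directed [Fintype V] (G : SimpleGraph V)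
    (hG : DirectedPathGraph G) (u v : V) (huv : u ≠ v) (hadj : ¬ G.Adj u v)
    (w : V) (hw : G.Adj u w ∧ G.Adj v w) :
    ∀ T : CliqueDPT G, TuvDirected G T u v :=
  common_neighbor_Tuv_directed_general G u v w hw
end

section
/- Let G be a chordal graph, T a clique tree of G, and z1, z2, z3, z4 four vertices forming an asteroidal quadruple. Then the minimal subtree T(z1,z2,z3,z4) of T connecting the subtrees T^{z1}, T^{z2}, T^{z3}, T^{z4} has exactly four leaves. -/
open SimpleGraph

variable {V : Type*}

/-- `Q` is a leaf of the subtree induced on `W`: it lies in `W` and has exactly one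
neighbor in `W`. -/
def IsLeafIn (T : SimpleGraph α) (W : Set α) (Q : α) : Prop :=
  Q ∈ W ∧ ∃! R, R ∈ W ∧ T.Adj Q R

/-- `W` is a connected set of cliques of the clique tree `T` meeting each of the
subtrees `T^{z1}, T^{z2}, T^{z3}`. -/
def IsConnector3 (G : SimpleGraph V) (T : CliqueTree G) (z1 z2 z3 : V)
    (W : Set (MaxClique G)) : Prop :=
  (T.tree.induce W).Connected ∧
    (∃ Q ∈ W, z1 ∈ Q.1) ∧ (∃ Q ∈ W, z2 ∈ Q.1) ∧ (∃ Q ∈ W, z3 ∈ Q.1)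

/-- `W` is a connected set of cliques of the clique tree `T` meeting each of the
subtrees `T^{z1}, T^{z2}, T^{z3}, T^{z4}`. -/
def IsConnector4 (G : SimpleGraph V) (T : CliqueTree G) (z1 z2 z3 z4 : V)
    (W : Set (MaxClique G)) : Prop :=
  (T.tree.induce W).Connected ∧
    (∃ Q ∈ W, z1 ∈ Q.1) ∧ (∃ Q ∈ W, z2 ∈ Q.1) ∧ (∃ Q ∈ W, z3 ∈ Q.1) ∧ (∃ Q ∈ W, z4 ∈ Q.1)

/-- An interval graph: the intersection graph of a family of (nonempty) closed
intervals of the real line. -/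
def IsIntervalGraph (G : SimpleGraph V) : Prop :=
  ∃ a b : V → ℝ, (∀ v, a v ≤ b v) ∧
    ∀ u v : V, G.Adj u v ↔ u ≠ v ∧ (Set.Icc (a u) (b u) ∩ Set.Icc (a v) (b v)).Nonempty

/-- The underlying tree of `T` is a path: every vertex has at most two neighbors. -/
def CliqueTree.IsCliquePath (G : SimpleGraph V) (T : CliqueTree G) : Prop :=
  ∀ Q a b c : MaxClique G, T.tree.Adj Q a → T.tree.Adj Q b → T.tree.Adj Q c →
    a = b ∨ a = c ∨ b = c

/-!
Let `W` be a minimal connected set of nodes of `T` meeting every `T^{zᵢ}`. Deleting a leaf `L`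
of `W` leaves it connected, so by minimality some `zᵢ` lies, among the cliques of `W`, in `L`
only: `W` has at most four leaves. Conversely, a clique `Q ∈ W` containing some `zᵢ` is a leaf.
Otherwise `Q` has two neighbours in `W`, and by minimality each of the two branches of `W` at
`Q` owns some `z` of the quadruple. A path between these two avoiding `N[zᵢ] ⊇ Q` yields,
through the subtrees `T^x` of its vertices, a walk of `T` between the two branches that
avoids `Q`, which is impossible in a tree. Finally, the cliques of `W` containing distinct
`zᵢ` are distinct because the `zᵢ` are pairwise non-adjacent.
-/

namespace SimpleGraph

variable {α : Type*} {H : SimpleGraph α}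

theorem reachable_induce_iff {s : Set α} {x y : s} :
    (H.induce s).Reachable x y ↔ ∃ p : H.Walk x y, ∀ z ∈ p.support, z ∈ s := by
  constructor
  · rintro ⟨p⟩
    induction p with
    | nil => exact ⟨.nil, fun z hz => List.mem_singleton.1 hz ▸ Subtype.prop _⟩
    | @cons u _ _ huv _ ih =>
      obtain ⟨q, hq⟩ := ih
      exact ⟨.cons huv q, fun z hz => (List.mem_cons.1 hz).elim (· ▸ u.2) (hq z)⟩
  · rintro ⟨p, hp⟩
    exact ⟨p.induce s hp⟩

theorem IsAcyclic.mem_support_of_adj_of_adj (hH : H.IsAcyclic) {q r r' : α}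
    (hr : H.Adj q r) (hr' : H.Adj q r') (hne : r ≠ r') (p : H.Walk r r') : q ∈ p.support := by
  classical
  have hpath : (Walk.cons hr.symm (Walk.cons hr' Walk.nil) : H.Walk r r').IsPath := by
    simp [hr.ne', hr'.ne, hne]
  have hbypass : p.bypass = _ := congrArg Subtype.val
    ((hH.subsingleton_path r r').elim ⟨p.bypass, p.bypass_isPath⟩ ⟨_, hpath⟩)
  exact p.support_bypass_subset_support (by simp [hbypass])

theorem Connected.induce_diff {W S : Set α} (hW : (H.induce W).Connected) {q : α} (hq : q ∈ W)
    (hqS : q ∉ S) (hS : ∀ x ∈ S, ∀ y ∈ W, H.Adj x y → y ≠ q → y ∈ S) :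
    (H.induce (W \ S)).Connected := by
  -- a walk inside `W` from outside `S` reaches `q` before it can enter `S`
  have walk_diff : ∀ {x v : α} (p : H.Walk x v), (∀ z ∈ p.support, z ∈ W) → x ∉ S →
      (∀ z ∈ S, ∀ y ∈ W, H.Adj z y → y ≠ v → y ∈ S) →
      ∃ p' : H.Walk x v, ∀ z ∈ p'.support, z ∈ W \ S := by
    intro x v p
    induction p with
    | nil =>
      intro hp hxS _
      exact ⟨.nil, fun z hz => by obtain rfl := List.mem_singleton.1 hz; exact ⟨hp z hz, hxS⟩⟩
    | @cons x y v hxy p ih =>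
      intro hp hxS hS
      by_cases hyS : y ∈ S
      · obtain rfl : x = v := by_contra fun hxv => hxS (hS y hyS x (hp x (by simp)) hxy.symm hxv)
        exact ⟨.nil, fun z hz => by
          obtain rfl := List.mem_singleton.1 hz; exact ⟨hp z (by simp), hxS⟩⟩
      · obtain ⟨p', hp'⟩ := ih (fun z hz => hp z (by simp [hz])) hyS hS
        refine ⟨.cons hxy p', fun z hz => ?_⟩
        rcases List.mem_cons.1 hz with rfl | hz
        exacts [⟨hp z (by simp), hxS⟩, hp' z hz]
  rw [connected_iff_exists_forall_reachable]
  refine ⟨⟨q, hq, hqS⟩, fun ⟨x, hxW, hxS⟩ => Reachable.symm ?_⟩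
  obtain ⟨p, hp⟩ := reachable_induce_iff.1 (hW.preconnected ⟨x, hxW⟩ ⟨q, hq⟩)
  exact reachable_induce_iff.2 (walk_diff p hp hxS hS)

/-- For a tree `H` and a neighbour `r` of `q ∈ W`, the branch of `W` at `q` containing `r`. -/
def branch (H : SimpleGraph α) (W : Set α) (q r : α) : Set α :=
  {x | ∃ p : H.Walk r x, ∀ z ∈ p.support, z ∈ W ∧ z ≠ q}

theorem Connected.induce_diff_branch {W : Set α} (hW : (H.induce W).Connected) {q : α}
    (hq : q ∈ W) (r : α) : (H.induce (W \ H.branch W q r)).Connected := by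
  refine hW.induce_diff hq (fun ⟨p, hp⟩ => (hp q p.end_mem_support).2 rfl) ?_
  rintro x ⟨p, hp⟩ y hyW hxy hyq
  refine ⟨p.concat hxy, fun z hz => ?_⟩
  rw [Walk.support_concat, List.mem_append, List.mem_singleton] at hz
  rcases hz with hz | rfl
  exacts [hp z hz, ⟨hyW, hyq⟩]

end SimpleGraph

section Leaves

variable {α : Type*} {H : SimpleGraph α} {W : Set α}

theorem IsLeafIn.connected_induce_diff_singleton {l : α} (hW : (H.induce W).Connected)
    (hl : IsLeafIn H W l) : (H.induce (W \ {l})).Connected := by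
  obtain ⟨-, r, ⟨hrW, hlr⟩, huniq⟩ := hl
  refine hW.induce_diff hrW hlr.ne' ?_
  rintro x rfl y hyW hxy hyr
  exact absurd (huniq y ⟨hyW, hxy⟩) hyr

theorem exists_adj_adj_of_not_isLeafIn (hW : (H.induce W).Connected) {x y : α}
    (hx : x ∈ W) (hy : y ∈ W) (hxy : x ≠ y) (hl : ¬ IsLeafIn H W x) :
    ∃ r r', r ≠ r' ∧ r ∈ W ∧ r' ∈ W ∧ H.Adj x r ∧ H.Adj x r' := by
  obtain ⟨p⟩ := hW.preconnected ⟨x, hx⟩ ⟨y, hy⟩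
  have hsnd := p.adj_snd (Walk.not_nil_of_ne (by simpa using hxy))
  by_contra! h
  exact hl ⟨hx, p.snd, ⟨p.snd.2, hsnd⟩, fun r ⟨hrW, hxr⟩ =>
    by_contra fun hne => h r p.snd hne hrW p.snd.2 hxr hsnd⟩

end Leaves

section Asteroidal

variable {G : SimpleGraph V}

theorem IsAsteroidalTriple.swap12 {a b c : V} (h : IsAsteroidalTriple G a b c) :
    IsAsteroidalTriple G b a c := by
  obtain ⟨hab, hbc, hac, nab, nbc, nac, ⟨p, hp⟩, pbc, pac⟩ := h
  exact ⟨hab.symm, hac, hbc, fun h => nab h.symm, nac, nbc,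
    ⟨p.reverse, fun x hx => hp x (by simpa using hx)⟩, pac, pbc⟩

theorem IsAsteroidalTriple.swap23 {a b c : V} (h : IsAsteroidalTriple G a b c) :
    IsAsteroidalTriple G a c b := by
  obtain ⟨hab, hbc, hac, nab, nbc, nac, pab, ⟨p, hp⟩, pac⟩ := h
  exact ⟨hac, hbc.symm, hab, nac, fun h => nbc h.symm, nab, pac,
    ⟨p.reverse, fun x hx => hp x (by simpa using hx)⟩, pab⟩

def IsAsteroidalSet (G : SimpleGraph V) (Z : Set V) : Prop :=
  ∀ a ∈ Z, ∀ b ∈ Z, ∀ c ∈ Z, a ≠ b → b ≠ c → a ≠ c → IsAsteroidalTriple G a b c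

theorem IsAsteroidalQuadruple.isAsteroidalSet {a b c d : V}
    (h : IsAsteroidalQuadruple G a b c d) : IsAsteroidalSet G {a, b, c, d} := by
  obtain ⟨habc, habd, hacd, hbcd⟩ := h
  simp only [IsAsteroidalSet, Set.mem_insert_iff, Set.mem_singleton_iff]
  rintro x (rfl | rfl | rfl | rfl) y (rfl | rfl | rfl | rfl) z (rfl | rfl | rfl | rfl)
    hxy hyz hxz <;>
    first
    | exact absurd rfl hxy | exact absurd rfl hyz | exact absurd rfl hxz
    | assumption
    | exact .swap12 (by assumption) | exact .swap23 (by assumption)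
    | exact .swap12 (.swap23 (by assumption)) | exact .swap23 (.swap12 (by assumption))
    | exact .swap12 (.swap23 (.swap12 (by assumption)))

theorem IsAsteroidalSet.exists_walk_not_mem {Z K : Set V} (hZ : IsAsteroidalSet G Z)
    (hK : G.IsClique K) {a b c : V} (ha : a ∈ Z) (hb : b ∈ Z) (hc : c ∈ Z) (hcK : c ∈ K)
    (haK : a ∉ K) (hbK : b ∉ K) : ∃ p : G.Walk a b, ∀ x ∈ p.support, x ∉ K := by
  obtain rfl | hab := eq_or_ne a b
  · exact ⟨.nil, fun x hx => List.mem_singleton.1 hx ▸ haK⟩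
  have hac : a ≠ c := fun h => haK (h ▸ hcK)
  have hbc : b ≠ c := fun h => hbK (h ▸ hcK)
  obtain ⟨p, hp⟩ := (hZ a ha b hb c hc hab hbc hac).2.2.2.2.2.2.1
  exact ⟨p, fun x hx hxK => (hp x hx).2 (hK hcK hxK (hp x hx).1.symm)⟩

end Asteroidal

section MaxClique

variable {G : SimpleGraph V}

theorem exists_maxClique_superset {s : Set V} (hs : G.IsClique s) : ∃ M : MaxClique G, s ⊆ M.1 := by
  obtain ⟨M, hsM, hM⟩ := zorn_subset_nonempty {t | G.IsClique t}
    (fun c hc hchain _ => ⟨⋃₀ c, (isClique_sUnion hchain.directedOn).2 hc,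
      fun _ => Set.subset_sUnion_of_mem⟩) s hs
  exact ⟨⟨M, hM.prop, fun _ hR hMR => hM.eq_of_subset hR hMR⟩, hsM⟩

theorem MaxClique.ne_of_not_adj {A B : MaxClique G} {a b : V} (ha : a ∈ A.1) (hb : b ∈ B.1)
    (hab : a ≠ b) (hnab : ¬ G.Adj a b) : A ≠ B :=
  fun h => hnab (A.2.1 ha (h ▸ hb) hab)

end MaxClique

namespace CliqueTree

variable {G : SimpleGraph V} (T : CliqueTree G)

theorem exists_walk_of_mem {v : V} {A B : MaxClique G} (hA : v ∈ A.1) (hB : v ∈ B.1) :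
    ∃ q : T.tree.Walk A B, ∀ P ∈ q.support, v ∈ P.1 :=
  reachable_induce_iff.1 ((T.subtree v).preconnected ⟨A, hA⟩ ⟨B, hB⟩)

theorem exists_walk_not_mem_of_walk {a b : V} (p : G.Walk a b) {Q : MaxClique G}
    (hp : ∀ x ∈ p.support, x ∉ Q.1) {A B : MaxClique G} (hA : a ∈ A.1) (hB : b ∈ B.1) :
    ∃ q : T.tree.Walk A B, Q ∉ q.support := by
  induction p generalizing A with
  | nil =>
    obtain ⟨q, hq⟩ := T.exists_walk_of_mem hA hB
    exact ⟨q, fun hQ => hp _ (by simp) (hq Q hQ)⟩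
  | @cons a a' b haa' p ih =>
    obtain ⟨M, hM⟩ := exists_maxClique_superset (G.isClique_pair.2 fun _ => haa')
    obtain ⟨q₁, hq₁⟩ := T.exists_walk_of_mem hA (hM (by simp))
    obtain ⟨q₂, hq₂⟩ := ih (fun x hx => hp x (by simp [hx])) (hM (by simp)) hB
    refine ⟨q₁.append q₂, fun hQ => ?_⟩
    rcases (Walk.mem_support_append_iff _ _).1 hQ with hQ | hQ
    exacts [hp a (by simp) (hq₁ Q hQ), hq₂ hQ]

def IsConnector (Z : Set V) (W : Set (MaxClique G)) : Prop :=
  (T.tree.induce W).Connected ∧ ∀ z ∈ Z, ∃ Q ∈ W, z ∈ Q.1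

theorem isConnector_iff_isConnector4 {z1 z2 z3 z4 : V} {W : Set (MaxClique G)} :
    T.IsConnector {z1, z2, z3, z4} W ↔ IsConnector4 G T z1 z2 z3 z4 W := by
  simp [IsConnector, IsConnector4]

variable {T} {Z : Set V} {W : Set (MaxClique G)}

theorem exists_forall_mem_of_minimal (hW : Minimal (T.IsConnector Z) W) {S : Set (MaxClique G)}
    {X : MaxClique G} (hX : X ∈ W) (hXS : X ∈ S) (hconn : (T.tree.induce (W \ S)).Connected) :
    ∃ z ∈ Z, ∀ P ∈ W, z ∈ P.1 → P ∈ S := by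
  have hlt : W \ S < W := (Set.ssubset_iff_of_subset Set.sdiff_subset).2 ⟨X, hX, fun h => h.2 hXS⟩
  have hnot := hW.not_prop_of_lt hlt
  simp only [IsConnector, hconn, true_and, not_forall, not_exists, not_and] at hnot
  obtain ⟨z, hz, hzS⟩ := hnot
  exact ⟨z, hz, fun P hP hzP => by_contra fun hPS => hzS P ⟨hP, hPS⟩ hzP⟩

theorem _root_.IsLeafIn.exists_forall_mem_eq (hW : Minimal (T.IsConnector Z) W)
    {L : MaxClique G} (hL : IsLeafIn T.tree W L) : ∃ z ∈ Z, ∀ P ∈ W, z ∈ P.1 → P = L :=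
  exists_forall_mem_of_minimal hW hL.1 rfl (hL.connected_induce_diff_singleton hW.prop.1)

theorem isLeafIn_of_minimal (hZ : IsAsteroidalSet G Z) (hW : Minimal (T.IsConnector Z) W)
    {Q : MaxClique G} (hQ : Q ∈ W) {c : V} (hc : c ∈ Z) (hcQ : c ∈ Q.1) (hZQ : ¬ Z ⊆ Q.1) :
    IsLeafIn T.tree W Q := by
  by_contra hleaf
  obtain ⟨z, hz, hzQ⟩ := Set.not_subset.1 hZQ
  obtain ⟨P, hPW, hzP⟩ := hW.prop.2 z hz
  obtain ⟨R₁, R₂, hR, hR₁, hR₂, hQR₁, hQR₂⟩ := exists_adj_adj_of_not_isLeafIn hW.prop.1 hQ hPW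
    (fun h => hzQ (h ▸ hzP)) hleaf
  have owned_vertex : ∀ R ∈ W, R ≠ Q → ∃ z ∈ Z, z ∉ Q.1 ∧ ∃ A ∈ W, z ∈ A.1 ∧
      ∃ q : T.tree.Walk R A, Q ∉ q.support := by
    intro R hRW hRQ
    have hR : R ∈ T.tree.branch W Q R :=
      ⟨.nil, fun x hx => by obtain rfl := List.mem_singleton.1 hx; exact ⟨hRW, hRQ⟩⟩
    obtain ⟨z, hz, hzS⟩ := exists_forall_mem_of_minimal hW hRW hR
      (hW.prop.1.induce_diff_branch hQ R)
    obtain ⟨A, hAW, hzA⟩ := hW.prop.2 z hz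
    obtain ⟨q, hq⟩ := hzS A hAW hzA
    refine ⟨z, hz, fun h => ?_, A, hAW, hzA, q, fun h => (hq Q h).2 rfl⟩
    obtain ⟨p, hp⟩ := hzS Q hQ h
    exact (hp Q p.end_mem_support).2 rfl
  obtain ⟨z₁, hz₁, hz₁Q, A₁, -, hzA₁, q₁, hq₁⟩ := owned_vertex R₁ hR₁ hQR₁.ne'
  obtain ⟨z₂, hz₂, hz₂Q, A₂, -, hzA₂, q₂, hq₂⟩ := owned_vertex R₂ hR₂ hQR₂.ne'
  obtain ⟨p, hp⟩ := hZ.exists_walk_not_mem Q.2.1 hz₁ hz₂ hc hcQ hz₁Q hz₂Q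
  obtain ⟨q, hq⟩ := T.exists_walk_not_mem_of_walk p hp hzA₁ hzA₂
  have hsep := T.isTree.isAcyclic.mem_support_of_adj_of_adj hQR₁ hQR₂ hR
    (q₁.append (q.append q₂.reverse))
  simp [Walk.mem_support_append_iff, hq₁, hq, hq₂] at hsep

end CliqueTree

theorem asteroidal_quadruple_four_leaves_general (G : SimpleGraph V)
    (T : CliqueTree G) (z1 z2 z3 z4 : V)
    (hAQ : IsAsteroidalQuadruple G z1 z2 z3 z4) (W : Set (MaxClique G))
    (hW : IsConnector4 G T z1 z2 z3 z4 W)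
    (hmin : ∀ W', W' ⊂ W → ¬ IsConnector4 G T z1 z2 z3 z4 W') :
    ∃ L1 L2 L3 L4 : MaxClique G,
      L1 ≠ L2 ∧ L1 ≠ L3 ∧ L1 ≠ L4 ∧ L2 ≠ L3 ∧ L2 ≠ L4 ∧ L3 ≠ L4 ∧
      IsLeafIn T.tree W L1 ∧ IsLeafIn T.tree W L2 ∧
      IsLeafIn T.tree W L3 ∧ IsLeafIn T.tree W L4 ∧
      ∀ Q, IsLeafIn T.tree W Q → Q = L1 ∨ Q = L2 ∨ Q = L3 ∨ Q = L4 := by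
  have hZ := hAQ.isAsteroidalSet
  have hWZ : Minimal (T.IsConnector {z1, z2, z3, z4}) W := minimal_iff_forall_lt.2
    ⟨T.isConnector_iff_isConnector4.2 hW,
      fun W' hW' => T.isConnector_iff_isConnector4.not.2 (hmin W' hW')⟩
  obtain ⟨⟨h12, h23, h13, n12, n23, n13, -⟩, ⟨-, h24, h14, -, n24, n14, -⟩,
    ⟨-, h34, -, -, n34, -⟩, -⟩ := hAQ
  have leaf : ∀ {L z}, L ∈ W → z ∈ ({z1, z2, z3, z4} : Set V) → z ∈ L.1 → IsLeafIn T.tree W L :=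
    fun {L _} hL hz hzL => CliqueTree.isLeafIn_of_minimal hZ hWZ hL hz hzL
      fun h => n12 (L.2.1 (h (by simp)) (h (by simp)) h12)
  obtain ⟨-, ⟨L1, hL1, h1⟩, ⟨L2, hL2, h2⟩, ⟨L3, hL3, h3⟩, ⟨L4, hL4, h4⟩⟩ := hW
  refine ⟨L1, L2, L3, L4, MaxClique.ne_of_not_adj h1 h2 h12 n12,
    MaxClique.ne_of_not_adj h1 h3 h13 n13, MaxClique.ne_of_not_adj h1 h4 h14 n14,
    MaxClique.ne_of_not_adj h2 h3 h23 n23, MaxClique.ne_of_not_adj h2 h4 h24 n24,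
    MaxClique.ne_of_not_adj h3 h4 h34 n34, leaf hL1 (by simp) h1, leaf hL2 (by simp) h2,
    leaf hL3 (by simp) h3, leaf hL4 (by simp) h4, fun Q hQ => ?_⟩
  obtain ⟨z, hz, hzQ⟩ := hQ.exists_forall_mem_eq hWZ
  rcases hz with rfl | rfl | rfl | rfl
  exacts [.inl (hzQ L1 hL1 h1).symm, .inr (.inl (hzQ L2 hL2 h2).symm),
    .inr (.inr (.inl (hzQ L3 hL3 h3).symm)), .inr (.inr (.inr (hzQ L4 hL4 h4).symm))]

/-- If `z1, z2, z3, z4` is an asteroidal quadruple of a chordal graph `G`, then for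
every clique tree `T` of `G` the minimal subtree `T(z1,z2,z3,z4)` has exactly four
leaves. -/
theorem asteroidal_quadruple_four_leaves [Fintype V] (G : SimpleGraph V)
    (hG : IsChordal G) (T : CliqueTree G) (z1 z2 z3 z4 : V)
    (hAQ : IsAsteroidalQuadruple G z1 z2 z3 z4) (W : Set (MaxClique G))
    (hW : IsConnector4 G T z1 z2 z3 z4 W)
    (hmin : ∀ W', W' ⊂ W → ¬ IsConnector4 G T z1 z2 z3 z4 W') :
    ∃ L1 L2 L3 L4 : MaxClique G,
      L1 ≠ L2 ∧ L1 ≠ L3 ∧ L1 ≠ L4 ∧ L2 ≠ L3 ∧ L2 ≠ L4 ∧ L3 ≠ L4 ∧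
      IsLeafIn T.tree W L1 ∧ IsLeafIn T.tree W L2 ∧
      IsLeafIn T.tree W L3 ∧ IsLeafIn T.tree W L4 ∧
      ∀ Q, IsLeafIn T.tree W Q → Q = L1 ∨ Q = L2 ∨ Q = L3 ∨ Q = L4 :=
  asteroidal_quadruple_four_leaves_general G T z1 z2 z3 z4 hAQ W hW hmin
end
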